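/- arXiv:2309.14276 — 7 statements merged into one kernel-verified Lean document; each statement's English description precedes it below -/
import Mathlib

section
/- Let p ≥ 3, let α ∈ (0,1), and let n₁ ≥ n₂ ≥ … ≥ n_p ≥ 1 be integers. Suppose there exist σ₂,…,σ_p ∈ {-1,0,1} such that n₁ + Σ_{i=2}^{p} σᵢ nᵢ = 0. Then Σ_{i=2}^{p} nᵢ^α − n₁^α ≥ (2 − 2^α) · Σ_{i=3}^{p} nᵢ^α. -/
/-!
For a concave `f`, increments over intervals of equal length shrink as the interval moves right;
for `f = x ^ α` and `0 ≤ b ≤ a` this gives `(a + b) ^ α ≤ a ^ α + (2 ^ α - 1) b ^ α`.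
Adding `n₃, …, n_p` one at a time to `n₂` (each at most the running total) yields
`(n₂ + ⋯ + n_p) ^ α ≤ n₂ ^ α + (2 ^ α - 1) Σ_{i ≥ 3} nᵢ ^ α`, and the sign relation gives
`n₁ ≤ n₂ + ⋯ + n_p`, so `n₁ ^ α` is bounded by the same quantity.
-/

open Finset

theorem ConcaveOn.map_add_sub_map_le {𝕜 : Type*}
    [Field 𝕜] [LinearOrder 𝕜] [IsStrictOrderedRing 𝕜]
    {s : Set 𝕜} {f : 𝕜 → 𝕜} (hf : ConcaveOn 𝕜 s f) {x y d : 𝕜} (hx : x ∈ s) (hyd : y + d ∈ s)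
    (hxy : x ≤ y) (hd : 0 ≤ d) :
    f (y + d) - f y ≤ f (x + d) - f x := by
  rcases (add_nonneg (sub_nonneg.2 hxy) hd).eq_or_lt with hL | hL
  · obtain rfl : x = y := by linarith
    obtain rfl : d = 0 := by linarith
    simp
  -- both `x + d` and `y` are convex combinations of `x` and `y + d`, with swapped weights
  set t := d / (y - x + d)
  have ht0 : 0 ≤ t := div_nonneg hd hL.le
  have ht1 : 0 ≤ 1 - t := by
    rw [sub_nonneg, div_le_one hL]; linarith
  have htL : t * (y - x + d) = d := div_mul_cancel₀ _ hL.ne'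
  have hxd := hf.2 hx hyd ht1 ht0 (by ring)
  have hy := hf.2 hx hyd ht0 ht1 (by ring)
  simp only [smul_eq_mul] at hxd hy
  rw [show (1 - t) * x + t * (y + d) = x + d by linear_combination htL] at hxd
  rw [show t * x + (1 - t) * (y + d) = y by linear_combination -htL] at hy
  linarith

theorem Real.rpow_add_le_rpow_add_mul_rpow {α a b : ℝ} (hα0 : 0 ≤ α) (hα1 : α ≤ 1)
    (hb : 0 ≤ b) (hba : b ≤ a) :
    (a + b) ^ α ≤ a ^ α + (2 ^ α - 1) * b ^ α := by
  have h := (Real.concaveOn_rpow hα0 hα1).map_add_sub_map_le hb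
    (Set.mem_Ici.2 (by linarith : (0 : ℝ) ≤ a + b)) hba hb
  rw [← two_mul, Real.mul_rpow zero_le_two hb] at h
  linarith

theorem Real.rpow_add_sum_le {ι : Type*} {α : ℝ} (hα0 : 0 ≤ α) (hα1 : α ≤ 1) (s : Finset ι)
    {b : ι → ℝ} (hb : ∀ i ∈ s, 0 ≤ b i) {a : ℝ} (hba : ∀ i ∈ s, b i ≤ a) :
    (a + ∑ i ∈ s, b i) ^ α ≤ a ^ α + (2 ^ α - 1) * ∑ i ∈ s, b i ^ α := by
  classical
  induction s using Finset.induction_on generalizing a with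
  | empty => simp
  | insert i s his ih =>
    rw [sum_insert his, sum_insert his, ← add_assoc]
    have hbi := hb i (mem_insert_self i s)
    have hba_i := hba i (mem_insert_self i s)
    calc (a + b i + ∑ j ∈ s, b j) ^ α
        ≤ (a + b i) ^ α + (2 ^ α - 1) * ∑ j ∈ s, b j ^ α :=
          ih (fun j hj ↦ hb j (mem_insert_of_mem hj))
            (fun j hj ↦ (hba j (mem_insert_of_mem hj)).trans (le_add_of_nonneg_right hbi))
      _ ≤ a ^ α + (2 ^ α - 1) * b i ^ α + (2 ^ α - 1) * ∑ j ∈ s, b j ^ α := by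
          gcongr; exact Real.rpow_add_le_rpow_add_mul_rpow hα0 hα1 hbi hba_i
      _ = a ^ α + (2 ^ α - 1) * (b i ^ α + ∑ j ∈ s, b j ^ α) := by ring

theorem le_sum_of_add_sum_mul_eq_zero {ι R : Type*}
    [CommRing R] [LinearOrder R] [IsStrictOrderedRing R]
    {s : Finset ι} {x : R} {σ y : ι → R} (hσ : ∀ i ∈ s, |σ i| ≤ 1) (hy : ∀ i ∈ s, 0 ≤ y i)
    (h : x + ∑ i ∈ s, σ i * y i = 0) :
    x ≤ ∑ i ∈ s, y i :=
  calc x = -∑ i ∈ s, σ i * y i := eq_neg_of_add_eq_zero_left h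
    _ ≤ |∑ i ∈ s, σ i * y i| := neg_le_abs _
    _ ≤ ∑ i ∈ s, |σ i * y i| := abs_sum_le_sum_abs _ _
    _ ≤ ∑ i ∈ s, y i := sum_le_sum fun i hi ↦ by
        rw [abs_mul, abs_of_nonneg (hy i hi)]
        exact mul_le_of_le_one_left (hy i hi) (hσ i hi)

theorem bourgain_staircase_general (p : ℕ) (hp : 3 ≤ p) (α : ℝ) (hα0 : 0 < α) (hα1 : α < 1)
    (n : ℕ → ℕ) (hmono : ∀ i j, 1 ≤ i → i ≤ j → j ≤ p → n j ≤ n i)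
    (σ : ℕ → ℤ) (hσ : ∀ i, 2 ≤ i → i ≤ p → σ i = -1 ∨ σ i = 0 ∨ σ i = 1)
    (hsum : (n 1 : ℤ) + ∑ i ∈ Finset.Icc 2 p, σ i * (n i : ℤ) = 0) :
    (2 - (2 : ℝ) ^ α) * ∑ i ∈ Finset.Icc 3 p, (n i : ℝ) ^ α
      ≤ (∑ i ∈ Finset.Icc 2 p, (n i : ℝ) ^ α) - (n 1 : ℝ) ^ α := by
  have hIcc : Finset.Icc 2 p = insert 2 (Finset.Icc 3 p) :=
    (Finset.insert_Icc_add_one_left_eq_Icc (by omega)).symm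
  have h2 : 2 ∉ Finset.Icc 3 p := by simp
  have hn1 : (n 1 : ℤ) ≤ ∑ i ∈ Finset.Icc 2 p, (n i : ℤ) :=
    le_sum_of_add_sum_mul_eq_zero
      (fun i hi ↦ by
        obtain ⟨hi2, hip⟩ := Finset.mem_Icc.1 hi
        rcases hσ i hi2 hip with h | h | h <;> simp [h])
      (fun i _ ↦ Int.natCast_nonneg _) hsum
  have hn1' : (n 1 : ℝ) ≤ n 2 + ∑ i ∈ Finset.Icc 3 p, (n i : ℝ) := by
    rw [← sum_insert h2 (f := fun i ↦ (n i : ℝ)), ← hIcc]; exact_mod_cast hn1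
  have hstair := Real.rpow_add_sum_le hα0.le hα1.le (Finset.Icc 3 p)
    (b := fun i ↦ (n i : ℝ)) (a := n 2) (fun i _ ↦ Nat.cast_nonneg _)
    (fun i hi ↦ by
      obtain ⟨hi3, hip⟩ := Finset.mem_Icc.1 hi
      exact_mod_cast hmono 2 i (by omega) (by omega) hip)
  have hpow := Real.rpow_le_rpow (Nat.cast_nonneg _) hn1' hα0.le
  rw [hIcc, sum_insert h2]
  linarith

/-- Bourgain's staircase inequality for sums of α-powers. -/
theorem bourgain_staircase (p : ℕ) (hp : 3 ≤ p) (α : ℝ) (hα0 : 0 < α) (hα1 : α < 1)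
    (n : ℕ → ℕ) (hmono : ∀ i j, 1 ≤ i → i ≤ j → j ≤ p → n j ≤ n i) (hlast : 1 ≤ n p)
    (σ : ℕ → ℤ) (hσ : ∀ i, 2 ≤ i → i ≤ p → σ i = -1 ∨ σ i = 0 ∨ σ i = 1)
    (hsum : (n 1 : ℤ) + ∑ i ∈ Finset.Icc 2 p, σ i * (n i : ℤ) = 0) :
    (2 - (2 : ℝ) ^ α) * ∑ i ∈ Finset.Icc 3 p, (n i : ℝ) ^ α
      ≤ (∑ i ∈ Finset.Icc 2 p, (n i : ℝ) ^ α) - (n 1 : ℝ) ^ α :=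
  bourgain_staircase_general p hp α hα0 hα1 n hmono σ hσ hsum
end

section
/- Let p̂ ≥ 3 and p ≥ p̂ be integers, let n₁ ≥ n₂ ≥ … ≥ n_{p̂} ≥ 1 be integers, and let σ₁,…,σ_{p̂} ∈ {−1,+1} be signs such that σ₁ = σ₂ whenever n₁ = n₂. If |Σ_{i=1}^{p̂} σᵢ nᵢ²| ≤ p, then n₁ ≤ 3·Σ_{i=3}^{p̂} nᵢ² + p − p̂. -/
/-!
Write the sum as `σ₁n₁² + σ₂n₂² + R`, where the tail `R` is bounded in absolute value by
`T = ∑_{i ≥ 3} nᵢ²`. The two leading terms cannot cancel well: with equal signs they add up to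
at least `n₁ + 1`, and with opposite signs `n₁ > n₂` forces `n₁² - n₂² ≥ n₁ + n₂ ≥ n₁ + 1`.
Hence `n₁ + 1 ≤ p + T`, and `T ≥ p̂ - 2` turns this into the claimed bound.
-/

open Finset

lemma add_one_le_abs_sign_mul_sq_add_sign_mul_sq {a b s t : ℤ} (hb : 1 ≤ b) (hba : b ≤ a)
    (hs : s = 1 ∨ s = -1) (ht : t = 1 ∨ t = -1) (hst : a = b → s = t) :
    a + 1 ≤ |s * a ^ 2 + t * b ^ 2| := by
  have hsq : a + 1 ≤ a ^ 2 + b ^ 2 := by nlinarith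
  have hdiff (hlt : b < a) : a + 1 ≤ a ^ 2 - b ^ 2 := by nlinarith
  have hlt (h : s ≠ t) : b < a := lt_of_le_of_ne hba fun hab => h (hst hab.symm)
  rcases hs with rfl | rfl <;> rcases ht with rfl | rfl
  · linarith [le_abs_self (1 * a ^ 2 + 1 * b ^ 2)]
  · linarith [hdiff (hlt (by norm_num)), le_abs_self (1 * a ^ 2 + -1 * b ^ 2)]
  · linarith [hdiff (hlt (by norm_num)), neg_abs_le (-1 * a ^ 2 + 1 * b ^ 2)]
  · linarith [neg_abs_le (-1 * a ^ 2 + -1 * b ^ 2)]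

lemma abs_sum_sign_mul_le_sum {ι : Type*} (s : Finset ι) (σ x : ι → ℤ)
    (hσ : ∀ i ∈ s, σ i = 1 ∨ σ i = -1) (hx : ∀ i ∈ s, 0 ≤ x i) :
    |∑ i ∈ s, σ i * x i| ≤ ∑ i ∈ s, x i := by
  refine (abs_sum_le_sum_abs _ _).trans (sum_le_sum fun i hi => ?_)
  rcases hσ i hi with h | h <;> simp [h, abs_of_nonneg (hx i hi)]

lemma card_le_sum_sq_of_one_le {ι : Type*} (s : Finset ι) (x : ι → ℤ) (hx : ∀ i ∈ s, 1 ≤ x i) :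
    (#s : ℤ) ≤ ∑ i ∈ s, x i ^ 2 := by
  simpa using card_nsmul_le_sum s (fun i => x i ^ 2) 1 fun i hi => one_le_pow₀ (hx i hi)

lemma sum_Icc_one_eq_add_add_sum_Icc_three {M : Type*} [AddCommMonoid M] (f : ℕ → M) {m : ℕ}
    (hm : 2 ≤ m) : ∑ i ∈ Icc 1 m, f i = f 1 + f 2 + ∑ i ∈ Icc 3 m, f i := by
  rw [← add_sum_Ioc_eq_sum_Icc (by omega), ← Icc_add_one_left_eq_Ioc,
    ← add_sum_Ioc_eq_sum_Icc (by omega), ← Icc_add_one_left_eq_Ioc]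
  exact (add_assoc _ _ _).symm

theorem bourgain_squares_general (phat p : ℕ) (h3 : 3 ≤ phat)
    (n : ℕ → ℕ) (hmono : ∀ i j, 1 ≤ i → i ≤ j → j ≤ phat → n j ≤ n i) (hlast : 1 ≤ n phat)
    (σ : ℕ → ℤ) (hσ : ∀ i, 1 ≤ i → i ≤ phat → σ i = 1 ∨ σ i = -1)
    (h12 : n 1 = n 2 → σ 1 = σ 2)
    (hsum : |∑ i ∈ Finset.Icc 1 phat, σ i * (n i : ℤ) ^ 2| ≤ (p : ℤ)) :
    (n 1 : ℤ) ≤ 3 * ∑ i ∈ Finset.Icc 3 phat, (n i : ℤ) ^ 2 + (p : ℤ) - (phat : ℤ) := by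
  set T := ∑ i ∈ Icc 3 phat, (n i : ℤ) ^ 2
  set R := ∑ i ∈ Icc 3 phat, σ i * (n i : ℤ) ^ 2
  have hpos (i : ℕ) (hi : i ∈ Icc 1 phat) : 1 ≤ n i := by
    rw [mem_Icc] at hi
    exact hlast.trans (hmono i phat hi.1 hi.2 le_rfl)
  have hR : |R| ≤ T := abs_sum_sign_mul_le_sum _ _ _
    (fun i hi => hσ i (by grind) (mem_Icc.1 hi).2) fun i _ => by positivity
  have hT : (phat : ℤ) - 2 ≤ T := by
    have := card_le_sum_sq_of_one_le (Icc 3 phat) (fun i => (n i : ℤ)) fun i hi => by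
      exact_mod_cast hpos i (by grind)
    rw [Nat.card_Icc] at this
    omega
  have hlead : (n 1 : ℤ) + 1 ≤ |σ 1 * (n 1 : ℤ) ^ 2 + σ 2 * (n 2 : ℤ) ^ 2| :=
    add_one_le_abs_sign_mul_sq_add_sign_mul_sq
      (by exact_mod_cast hpos 2 (mem_Icc.2 ⟨by omega, by omega⟩))
      (by exact_mod_cast hmono 1 2 le_rfl (by omega) (by omega))
      (hσ 1 le_rfl (by omega)) (hσ 2 (by omega) (by omega)) (fun h => h12 (by exact_mod_cast h))
  rw [sum_Icc_one_eq_add_add_sum_Icc_three _ (by omega)] at hsum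
  have hsplit := abs_sub (σ 1 * (n 1 : ℤ) ^ 2 + σ 2 * (n 2 : ℤ) ^ 2 + R) R
  rw [add_sub_cancel_right] at hsplit
  linarith

/-- Bourgain's lemma on almost-cancelling signed sums of squares. -/
theorem bourgain_squares (phat p : ℕ) (h3 : 3 ≤ phat) (hpp : phat ≤ p)
    (n : ℕ → ℕ) (hmono : ∀ i j, 1 ≤ i → i ≤ j → j ≤ phat → n j ≤ n i) (hlast : 1 ≤ n phat)
    (σ : ℕ → ℤ) (hσ : ∀ i, 1 ≤ i → i ≤ phat → σ i = 1 ∨ σ i = -1)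
    (h12 : n 1 = n 2 → σ 1 = σ 2)
    (hsum : |∑ i ∈ Finset.Icc 1 phat, σ i * (n i : ℤ) ^ 2| ≤ (p : ℤ)) :
    (n 1 : ℤ) ≤ 3 * ∑ i ∈ Finset.Icc 3 phat, (n i : ℤ) ^ 2 + (p : ℤ) - (phat : ℤ) :=
  bourgain_squares_general phat p h3 n hmono hlast σ hσ h12 hsum
end

section
/- Let n ≥ 2 and let x = (x₁,…,xₙ) ∈ ℝⁿ be such that for every permutation σ of {1,…,n} and every i ∈ {1,…,n−1} the partial sum x_{σ(1)} + … + x_{σ(i)} is nonzero. Then Σ_{σ ∈ Sₙ} ∏_{i=1}^{n−1} 1/(x_{σ(1)} + … + x_{σ(i)}) = (x₁ + … + xₙ) · ∏_{i=1}^{n} (1/xᵢ). -/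
/-!
Induction on the number of terms, conditioning on the last letter `p = σ(n)`. The first `n - 1`
letters then run through an arbitrary ordering of the remaining terms, whose partial sums are
the first `n - 2` partial sums of `σ`; the last one is `S - x_p`, where `S = ∑ xᵢ`. By induction
the sum over these orderings is `(S - x_p) ∏_{i ≠ p} 1/xᵢ`, and the factor `1/(S - x_p)` cancels
the prefactor, leaving `x_p ∏ᵢ 1/xᵢ`. Summing over `p` gives `S ∏ᵢ 1/xᵢ`.
-/

open Finset Equiv

namespace Equiv.Perm

-- Precomposing with `finRotate` moves the last position to `0`, which `decomposeFin` splits off.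
def decomposeFinLast {n : ℕ} : Perm (Fin (n + 1)) ≃ Fin (n + 1) × Perm (Fin n) :=
  (Equiv.mulRight (finRotate (n + 1))).symm.trans decomposeFin

@[simp]
theorem decomposeFinLast_symm_apply_castSucc {n : ℕ} (p : Fin (n + 1)) (τ : Perm (Fin n))
    (j : Fin n) : decomposeFinLast.symm (p, τ) j.castSucc = swap 0 p (τ j).succ := by
  simp [decomposeFinLast]

end Equiv.Perm

theorem Fin.mul_prod_swap_zero_succ {M : Type*} [CommMonoid M] {n : ℕ} (f : Fin (n + 1) → M)
    (p : Fin (n + 1)) : f p * ∏ j : Fin n, f (swap 0 p j.succ) = ∏ i, f i := by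
  rw [← Equiv.prod_comp (swap 0 p) f, Fin.prod_univ_succ, swap_apply_left]

section PrefixSum

variable {M : Type*} [AddCommMonoid M] {n : ℕ}

def prefixSum (x : Fin n → M) (σ : Perm (Fin n)) (k : ℕ) : M :=
  ∑ j ∈ univ.filter (fun j : Fin n => (j : ℕ) < k), x (σ j)

theorem prefixSum_one (x : Fin (n + 1) → M) (σ : Perm (Fin (n + 1))) :
    prefixSum x σ 1 = x (σ 0) := by
  simp only [prefixSum, Nat.lt_one_iff, Fin.val_eq_zero_iff, filter_eq', mem_univ, if_true,
    sum_singleton]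

theorem prefixSum_self (x : Fin n → M) (σ : Perm (Fin n)) : prefixSum x σ n = ∑ i, x i := by
  rw [prefixSum, filter_true_of_mem fun j _ => j.isLt, Equiv.sum_comp σ x]

theorem prefixSum_decomposeFinLast_symm (x : Fin (n + 1) → M) (p : Fin (n + 1))
    (τ : Perm (Fin n)) {k : ℕ} (hk : k ≤ n) :
    prefixSum x (Perm.decomposeFinLast.symm (p, τ)) k
      = prefixSum (fun j => x (swap 0 p j.succ)) τ k := by
  simp only [prefixSum, sum_filter, Fin.sum_univ_castSucc, Fin.val_last, if_neg hk.not_gt, add_zero,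
    Fin.val_castSucc, Perm.decomposeFinLast_symm_apply_castSucc]

end PrefixSum

theorem sum_perm_prod_inv_prefixSum {K : Type*} [Field K] {n : ℕ} (x : Fin (n + 1) → K)
    (hx₀ : ∀ i, x i ≠ 0) (hx : ∀ σ : Perm (Fin (n + 1)), ∀ k ∈ Icc 1 n, prefixSum x σ k ≠ 0) :
    ∑ σ : Perm (Fin (n + 1)), ∏ k ∈ Icc 1 n, (prefixSum x σ k)⁻¹
      = (∑ i, x i) * ∏ i, (x i)⁻¹ := by
  induction n with
  | zero => simp [mul_inv_cancel₀ (hx₀ 0)]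
  | succ n ih =>
    rw [← Perm.decomposeFinLast.symm.sum_comp, Fintype.sum_prod_type]
    have fiber (p : Fin (n + 2)) : ∑ τ : Perm (Fin (n + 1)),
        ∏ k ∈ Icc 1 (n + 1), (prefixSum x (Perm.decomposeFinLast.symm (p, τ)) k)⁻¹
          = x p * ∏ i, (x i)⁻¹ := by
      set y : Fin (n + 1) → K := fun j => x (swap 0 p j.succ)
      have hprefix (τ) {k} (hk : k ≤ n + 1) := prefixSum_decomposeFinLast_symm x p τ hk
      have hy : ∑ i, y i ≠ 0 := by
        have h := hx (Perm.decomposeFinLast.symm (p, 1)) (n + 1) (by simp)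
        rwa [hprefix 1 le_rfl, prefixSum_self] at h
      have hyprefix (τ) : ∀ k ∈ Icc 1 n, prefixSum y τ k ≠ 0 := fun k hk => by
        rw [mem_Icc] at hk
        have h := hx (Perm.decomposeFinLast.symm (p, τ)) k (mem_Icc.2 ⟨hk.1, by omega⟩)
        rwa [hprefix τ (by omega)] at h
      have hprod : ∏ i, (x i)⁻¹ = (x p)⁻¹ * ∏ j, (y j)⁻¹ :=
        (Fin.mul_prod_swap_zero_succ (fun i => (x i)⁻¹) p).symm
      calc _ = ∑ τ : Perm (Fin (n + 1)), (∏ k ∈ Icc 1 n, (prefixSum y τ k)⁻¹) * (∑ i, y i)⁻¹ := by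
            refine sum_congr rfl fun τ _ => ?_
            rw [prod_Icc_succ_top (by omega), hprefix τ le_rfl, prefixSum_self]
            congr 1
            exact prod_congr rfl fun k hk => by rw [hprefix τ (by simp at hk; omega)]
        _ = ∏ j, (y j)⁻¹ := by
            rw [← sum_mul, ih y (fun j => hx₀ _) hyprefix, mul_right_comm, mul_inv_cancel₀ hy,
              one_mul]
        _ = x p * ∏ i, (x i)⁻¹ := by rw [hprod, mul_inv_cancel_left₀ (hx₀ p)]
    simp only [fiber, ← sum_mul]

/-- Eliasson's permutation identity. -/
theorem eliasson_identity (n : ℕ) (hn : 2 ≤ n) (x : Fin n → ℝ)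
    (hx : ∀ σ : Equiv.Perm (Fin n), ∀ k ∈ Finset.Icc 1 (n - 1),
      (∑ j ∈ Finset.univ.filter (fun j : Fin n => (j : ℕ) < k), x (σ j)) ≠ 0) :
    ∑ σ : Equiv.Perm (Fin n), ∏ k ∈ Finset.Icc 1 (n - 1),
        (∑ j ∈ Finset.univ.filter (fun j : Fin n => (j : ℕ) < k), x (σ j))⁻¹
      = (∑ i, x i) * ∏ i, (x i)⁻¹ := by
  obtain ⟨m, rfl⟩ : ∃ m, n = m + 1 := ⟨n - 1, by omega⟩
  have hx₀ (i : Fin (m + 1)) : x i ≠ 0 := by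
    have h : prefixSum x (swap 0 i) 1 ≠ 0 := hx (swap 0 i) 1 (mem_Icc.2 ⟨le_rfl, by omega⟩)
    rwa [prefixSum_one, swap_apply_left] at h
  exact sum_perm_prod_inv_prefixSum x hx₀ hx
end

section
/- Let n ≥ 2 and let x = (x₁,…,xₙ) ∈ ℝⁿ with xᵢ ≠ 0 for all i and x₁ + … + xₙ = 0. Call a permutation σ of {1,…,n} allowed if x_{σ(1)} + … + x_{σ(i)} ≠ 0 for every i ∈ {1,…,n−1}. Then Σ over allowed permutations σ of ∏_{i=1}^{n−1} 1/(x_{σ(1)} + … + x_{σ(i)}) equals 0. -/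
/-!
With the convention `0⁻¹ = 0` the excluded permutations contribute nothing, so the sum runs over
all orderings of the index set `s`, i.e. over maximal chains of subsets of `s`, and satisfies a
recursion in `s`. If no proper nonempty subsum vanishes, the classical identity
`∑_σ ∏_{k=1}^{n} (y_{σ 1} + ⋯ + y_{σ k})⁻¹ = ∏ yᵢ⁻¹` shows that the sum with the last factor
removed equals `(∑ yᵢ) ∏ yᵢ⁻¹ = 0`.

In general, perturb `xᵢ` to `xᵢ + ε vᵢ` in Laurent series in `ε`, so that no proper subsum
vanishes while the total one still does; the perturbed sum is then exactly `0`. Orderings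
through a proper resonant set (one with `∑ xᵢ = 0`) are grouped by the first such set `I`.
By induction the orderings of `I` contribute `O(ε)`, the factor at `I` is `(ε (γ + ∑_I v))⁻¹`,
and the rest of the ordering is the analogous sum for `s \ I`, again `O(ε)`; so these groups
vanish at `ε = 0`, while the remaining orderings tend to the unperturbed sum, which is therefore
`0`.
-/

open Finset PowerSeries

section ChainSum

variable {ι R : Type*} [DecidableEq ι]

/-- `chainSum w s` is the sum over all orderings `i₁, …, iₘ` of `s` of `∏ₖ w {i₁, …, iₖ}`;
`properChainSum` omits the last factor `w s`. -/
def chainSum [CommRing R] (w : Finset ι → R) (s : Finset ι) : R :=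
  if s = ∅ then 1 else w s * ∑ j ∈ s.attach, chainSum w (s.erase j)
termination_by s.card
decreasing_by exact card_erase_lt_of_mem j.2

def properChainSum [CommRing R] (w : Finset ι → R) (s : Finset ι) : R :=
  ∑ j ∈ s, chainSum w (s.erase j)

variable [CommRing R] (w : Finset ι → R)

@[simp]
theorem chainSum_empty : chainSum w ∅ = 1 := by
  rw [chainSum, if_pos rfl]

@[simp]
theorem properChainSum_empty : properChainSum w ∅ = 0 := sum_empty

theorem chainSum_of_nonempty {s : Finset ι} (hs : s.Nonempty) :
    chainSum w s = w s * properChainSum w s := by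
  rw [chainSum, if_neg hs.ne_empty, properChainSum, sum_attach s (fun j => chainSum w (s.erase j))]

theorem chainSum_congr {w w' : Finset ι → R} {s : Finset ι} (h : ∀ t ⊆ s, w t = w' t) :
    chainSum w s = chainSum w' s := by
  induction s using Finset.strongInduction with
  | H s ih =>
    rcases s.eq_empty_or_nonempty with rfl | hs
    · simp
    rw [chainSum_of_nonempty w hs, chainSum_of_nonempty w' hs, h s subset_rfl, properChainSum,
      properChainSum]
    refine congrArg _ (sum_congr rfl fun j hj => ih _ (erase_ssubset hj) fun t ht => ?_)
    exact h t (ht.trans (erase_subset j s))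

theorem properChainSum_congr {w w' : Finset ι → R} {s : Finset ι}
    (h : ∀ t ⊆ s, t ≠ s → w t = w' t) : properChainSum w s = properChainSum w' s :=
  sum_congr rfl fun j hj => chainSum_congr fun t ht =>
    h t (ht.trans (erase_subset j s)) fun hts => notMem_erase j s (ht (hts ▸ hj))

theorem map_chainSum {S : Type*} [CommRing S] (f : R →+* S) (s : Finset ι) :
    f (chainSum w s) = chainSum (f ∘ w) s := by
  induction s using Finset.strongInduction with
  | H s ih =>
    rcases s.eq_empty_or_nonempty with rfl | hs
    · simp
    rw [chainSum_of_nonempty w hs, chainSum_of_nonempty _ hs, map_mul, properChainSum,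
      properChainSum, map_sum]
    exact congrArg _ (sum_congr rfl fun j hj => ih _ (erase_ssubset hj))

theorem map_properChainSum {S : Type*} [CommRing S] (f : R →+* S) (s : Finset ι) :
    f (properChainSum w s) = properChainSum (f ∘ w) s := by
  rw [properChainSum, map_sum]
  exact sum_congr rfl fun j _ => map_chainSum w f _

variable (B : Finset ι → Prop) [DecidablePred B]

def avoiding : Finset ι → R := fun t => if B t then 0 else w t

theorem chainSum_eq_avoiding_add {t : Finset ι}
    (ht : properChainSum w t = properChainSum (avoiding w B) t + ∑ I ∈ t.ssubsets with B I,
      w I * properChainSum (avoiding w B) I * properChainSum (fun u => w (I ∪ u)) (t \ I)) :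
    chainSum w t = chainSum (avoiding w B) t + ∑ I ∈ t.powerset with B I,
      w I * properChainSum (avoiding w B) I * chainSum (fun u => w (I ∪ u)) (t \ I) := by
  rcases t.eq_empty_or_nonempty with rfl | hne
  · simp [sum_filter]
  have hstrict : ∀ I ∈ t.ssubsets, chainSum (fun u => w (I ∪ u)) (t \ I)
      = w t * properChainSum (fun u => w (I ∪ u)) (t \ I) := fun I hI => by
    have hIt := mem_ssubsets.1 hI
    rw [chainSum_of_nonempty _ (sdiff_nonempty.2 (not_subset_of_ssubset hIt)),
      union_sdiff_of_subset hIt.subset]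
  rw [sum_filter, ← add_sum_erase _ _ (mem_powerset_self t), ← ssubsets,
    sum_congr rfl fun I hI => by rw [hstrict I hI], ← sum_filter, sdiff_self, bot_eq_empty,
    chainSum_empty, chainSum_of_nonempty _ hne, chainSum_of_nonempty _ hne, ht, avoiding]
  simp only [mul_one, mul_add, mul_sum, mul_left_comm (w t)]
  split_ifs <;> ring

/-- Orderings passing through a proper `B`-set are grouped by the first one, `I`. -/
theorem properChainSum_eq_avoiding_add (s : Finset ι) :
    properChainSum w s = properChainSum (avoiding w B) s + ∑ I ∈ s.ssubsets with B I,
      w I * properChainSum (avoiding w B) I * properChainSum (fun u => w (I ∪ u)) (s \ I) := by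
  induction s using Finset.strongInduction with
  | H s ih =>
    have hswap : ∀ j I, j ∈ s ∧ I ∈ {I ∈ (s.erase j).powerset | B I} ↔
        j ∈ s \ I ∧ I ∈ {I ∈ s.ssubsets | B I} := fun j I => by
      simp only [mem_filter, mem_powerset, mem_ssubsets, mem_sdiff, subset_erase]
      constructor
      · rintro ⟨hj, ⟨hIs, hjI⟩, hB⟩
        exact ⟨⟨hj, hjI⟩, Finset.ssubset_iff_subset_ne.2 ⟨hIs, fun h => hjI (h ▸ hj)⟩, hB⟩
      · rintro ⟨⟨hj, hjI⟩, hIs, hB⟩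
        exact ⟨hj, ⟨hIs.subset, hjI⟩, hB⟩
    rw [properChainSum, sum_congr rfl fun j hj =>
      chainSum_eq_avoiding_add w B (ih _ (erase_ssubset hj)), sum_add_distrib, sum_comm' hswap]
    refine congrArg _ (sum_congr rfl fun I _ => ?_)
    simp only [← mul_sum, erase_sdiff_comm, properChainSum]

end ChainSum

section Generic

variable {ι K : Type*} [DecidableEq ι] [Field K] (y : ι → K)

theorem sum_prod_erase_inv {s : Finset ι} (hy : ∀ i ∈ s, y i ≠ 0) :
    ∑ j ∈ s, ∏ i ∈ s.erase j, (y i)⁻¹ = (∑ i ∈ s, y i) * ∏ i ∈ s, (y i)⁻¹ := by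
  rw [sum_mul]
  refine sum_congr rfl fun j hj => ?_
  rw [← mul_prod_erase s _ hj, ← mul_assoc, mul_inv_cancel₀ (hy j hj), one_mul]

theorem chainSum_inv_sum {s : Finset ι} (hy : ∀ t ⊆ s, t.Nonempty → ∑ i ∈ t, y i ≠ 0) :
    chainSum (fun t => (∑ i ∈ t, y i)⁻¹) s = ∏ i ∈ s, (y i)⁻¹ := by
  induction s using Finset.strongInduction with
  | H s ih =>
    rcases s.eq_empty_or_nonempty with rfl | hs
    · simp
    have hyi : ∀ i ∈ s, y i ≠ 0 := fun i hi => by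
      simpa using hy {i} (singleton_subset_iff.2 hi) (singleton_nonempty i)
    rw [chainSum_of_nonempty _ hs, properChainSum,
      sum_congr rfl fun j hj =>
        ih _ (erase_ssubset hj) fun t ht => hy t (ht.trans (erase_subset j s)),
      sum_prod_erase_inv y hyi, inv_mul_cancel_left₀ (hy s subset_rfl hs)]

theorem properChainSum_inv_sum {s : Finset ι}
    (hy : ∀ t ⊆ s, t.Nonempty → t ≠ s → ∑ i ∈ t, y i ≠ 0) (hyi : ∀ i ∈ s, y i ≠ 0) :
    properChainSum (fun t => (∑ i ∈ t, y i)⁻¹) s = (∑ i ∈ s, y i) * ∏ i ∈ s, (y i)⁻¹ := by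
  rw [properChainSum, ← sum_prod_erase_inv y hyi]
  refine sum_congr rfl fun j hj =>
    chainSum_inv_sum y fun t ht hne => hy t (ht.trans (erase_subset j s)) hne ?_
  intro hts
  exact notMem_erase j s (ht (hts ▸ hj))

end Generic

section ValueAtZero

variable {F : Type*} [Field F]

def HasValueAtZero (f : LaurentSeries F) (r : F) : Prop :=
  ∃ g : F⟦X⟧, (g : LaurentSeries F) = f ∧ constantCoeff g = r

namespace HasValueAtZero

variable {f f' : LaurentSeries F} {r r' : F}

theorem zero : HasValueAtZero (0 : LaurentSeries F) 0 := ⟨0, map_zero _, map_zero _⟩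

theorem unique (h : HasValueAtZero f r) (h' : HasValueAtZero f r') : r = r' := by
  obtain ⟨g, rfl, rfl⟩ := h
  obtain ⟨g', hg', rfl⟩ := h'
  rw [HahnSeries.ofPowerSeries_injective hg']

theorem add (h : HasValueAtZero f r) (h' : HasValueAtZero f' r') :
    HasValueAtZero (f + f') (r + r') := by
  obtain ⟨g, rfl, rfl⟩ := h
  obtain ⟨g', rfl, rfl⟩ := h'
  exact ⟨g + g', map_add _ _ _, map_add _ _ _⟩

theorem mul (h : HasValueAtZero f r) (h' : HasValueAtZero f' r') :
    HasValueAtZero (f * f') (r * r') := by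
  obtain ⟨g, rfl, rfl⟩ := h
  obtain ⟨g', rfl, rfl⟩ := h'
  exact ⟨g * g', map_mul _ _ _, map_mul _ _ _⟩

theorem sum {α : Type*} {s : Finset α} {f : α → LaurentSeries F} {r : α → F}
    (h : ∀ a ∈ s, HasValueAtZero (f a) (r a)) : HasValueAtZero (∑ a ∈ s, f a) (∑ a ∈ s, r a) := by
  classical
  induction s using Finset.induction_on with
  | empty => simpa using zero
  | insert a s ha ih =>
    rw [sum_insert ha, sum_insert ha]
    exact (h a (mem_insert_self a s)).add (ih fun b hb => h b (mem_insert_of_mem hb))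

theorem inv (h : HasValueAtZero f r) (hr : r ≠ 0) : HasValueAtZero f⁻¹ r⁻¹ := by
  obtain ⟨g, rfl, rfl⟩ := h
  refine ⟨g⁻¹, eq_inv_of_mul_eq_one_right ?_, PowerSeries.constantCoeff_inv g⟩
  rw [← map_mul, PowerSeries.mul_inv_cancel g hr, map_one]

end HasValueAtZero

noncomputable def perturb (a b : F) : LaurentSeries F := (C a + X * C b : F⟦X⟧)

theorem hasValueAtZero_perturb (a b : F) : HasValueAtZero (perturb a b) a :=
  ⟨_, rfl, by simp⟩

theorem perturb_eq_zero_iff {a b : F} : perturb a b = 0 ↔ a = 0 ∧ b = 0 := by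
  refine ⟨fun h => ?_, fun ⟨ha, hb⟩ => by simp [perturb, ha, hb]⟩
  have h0 : (C a + X * C b : F⟦X⟧) = 0 :=
    HahnSeries.ofPowerSeries_injective (h.trans (map_zero _).symm)
  exact ⟨by simpa using congrArg constantCoeff h0, by simpa using congrArg (coeff 1) h0⟩

theorem sum_perturb {α : Type*} (s : Finset α) (a b : α → F) :
    ∑ i ∈ s, perturb (a i) (b i) = perturb (∑ i ∈ s, a i) (∑ i ∈ s, b i) := by
  simp only [perturb, ← map_sum, sum_add_distrib, ← mul_sum]

theorem HasValueAtZero.exists_div_perturb_zero {f : LaurentSeries F} (hf : HasValueAtZero f 0)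
    {c : F} (hc : c ≠ 0) : ∃ r, HasValueAtZero (f / perturb 0 c) r := by
  obtain ⟨g, rfl, hg⟩ := hf
  obtain ⟨h, rfl⟩ := X_dvd_iff.2 hg
  have hp : perturb 0 c ≠ 0 := fun h0 => hc (perturb_eq_zero_iff.1 h0).2
  refine ⟨_, ⟨h * C c⁻¹, ?_, rfl⟩⟩
  rw [eq_div_iff hp, perturb, ← map_mul, map_zero, zero_add, mul_comm X, ← mul_assoc,
    mul_assoc h, ← map_mul, inv_mul_cancel₀ hc, map_one, mul_one, mul_comm]

end ValueAtZero

section Orderings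

variable {ι : Type*} [DecidableEq ι]

def prefixSet {m : ℕ} (f : Fin m → ι) (k : ℕ) : Finset ι :=
  (univ.filter fun j : Fin m => (j : ℕ) < k).image f

theorem prefixSet_snoc {m : ℕ} (g : Fin m → ι) (a : ι) {k : ℕ} (hk : k ≤ m) :
    prefixSet (Fin.snoc g a : Fin (m + 1) → ι) k = prefixSet g k := by
  ext b
  simp only [prefixSet, mem_image, mem_filter, mem_univ, true_and, Fin.exists_fin_succ',
    Fin.snoc_castSucc, Fin.snoc_last, Fin.val_castSucc, Fin.val_last]
  exact or_iff_left fun h => absurd h.1 (not_lt.2 hk)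

variable [Fintype ι]

def orderings (m : ℕ) (s : Finset ι) : Finset (Fin m → ι) :=
  {f | Function.Injective f ∧ ∀ i, f i ∈ s}

theorem snoc_mem_orderings {m : ℕ} {s : Finset ι} {g : Fin m → ι} {a : ι} :
    Fin.snoc g a ∈ orderings (m + 1) s ↔ a ∈ s ∧ g ∈ orderings m (s.erase a) := by
  simp only [orderings, mem_filter, mem_univ, true_and, Function.Injective, Fin.forall_fin_succ',
    Fin.snoc_castSucc, Fin.snoc_last, mem_erase, Fin.castSucc_inj, Fin.castSucc_ne_last,
    (Fin.castSucc_ne_last _).symm, imp_false, ne_eq, implies_true, and_true]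
  constructor
  · rintro ⟨⟨hg, -⟩, hgs, ha⟩
    exact ⟨ha, fun i j h => (hg i).1 j h, fun i => ⟨(hg i).2, hgs i⟩⟩
  · rintro ⟨ha, hg, hgs⟩
    exact ⟨⟨fun i => ⟨fun j h => hg h, (hgs i).1⟩, fun i h => (hgs i).1 h.symm⟩,
      fun i => (hgs i).2, ha⟩

theorem sum_orderings_succ {M : Type*} [AddCommMonoid M] (m : ℕ) (s : Finset ι)
    (F : (Fin (m + 1) → ι) → M) :
    ∑ f ∈ orderings (m + 1) s, F f = ∑ a ∈ s, ∑ g ∈ orderings m (s.erase a), F (Fin.snoc g a) := by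
  rw [sum_sigma']
  refine sum_bij' (fun f _ => ⟨f (Fin.last m), Fin.init f⟩) (fun p _ => Fin.snoc p.2 p.1)
    (fun f hf => ?_) (fun p hp => ?_) (fun f _ => Fin.snoc_init_self f) (fun p _ => ?_)
    (fun f _ => by rw [Fin.snoc_init_self])
  · rw [← Fin.snoc_init_self f, snoc_mem_orderings] at hf
    exact mem_sigma.2 hf
  · exact snoc_mem_orderings.2 (mem_sigma.1 hp)
  · simp

theorem prefixSet_eq_of_mem_orderings {m : ℕ} {s : Finset ι} {f : Fin m → ι}
    (hf : f ∈ orderings m s) (hs : s.card = m) : prefixSet f m = s := by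
  obtain ⟨hinj, hfs⟩ := (mem_filter.1 hf).2
  refine eq_of_subset_of_card_le (image_subset_iff.2 fun j _ => hfs j) ?_
  rw [prefixSet, card_image_of_injective _ hinj, filter_true_of_mem fun j _ => j.2, card_univ,
    Fintype.card_fin, hs]

variable {R : Type*} [CommRing R] (w : Finset ι → R)

theorem sum_orderings_succ_prod (m : ℕ) (s : Finset ι) :
    ∑ f ∈ orderings (m + 1) s, ∏ k ∈ Icc 1 m, w (prefixSet f k) =
      ∑ a ∈ s, ∑ g ∈ orderings m (s.erase a), ∏ k ∈ Icc 1 m, w (prefixSet g k) := by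
  rw [sum_orderings_succ]
  refine sum_congr rfl fun a _ => sum_congr rfl fun g _ => prod_congr rfl fun k hk => ?_
  rw [prefixSet_snoc g a (mem_Icc.1 hk).2]

theorem sum_orderings_prod_eq_chainSum {m : ℕ} {s : Finset ι} (hs : s.card = m) :
    ∑ f ∈ orderings m s, ∏ k ∈ Icc 1 m, w (prefixSet f k) = chainSum w s := by
  induction m generalizing s with
  | zero =>
    rw [card_eq_zero.1 hs]
    simp [orderings, Function.injective_of_subsingleton]
  | succ m ih =>
    have hne : s.Nonempty := card_pos.1 (hs ▸ m.succ_pos)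
    rw [chainSum_of_nonempty w hne, properChainSum, ← sum_congr rfl fun a ha =>
      ih (s := s.erase a) (by rw [card_erase_of_mem ha, hs, Nat.add_sub_cancel]),
      ← sum_orderings_succ_prod, mul_sum]
    refine sum_congr rfl fun f hf => ?_
    rw [prod_Icc_succ_top (Nat.le_add_left 1 m), prefixSet_eq_of_mem_orderings hf hs, mul_comm]

theorem sum_orderings_prod_eq_properChainSum {m : ℕ} {s : Finset ι} (hs : s.card = m + 1) :
    ∑ f ∈ orderings (m + 1) s, ∏ k ∈ Icc 1 m, w (prefixSet f k) = properChainSum w s := by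
  rw [sum_orderings_succ_prod, properChainSum]
  refine sum_congr rfl fun a ha => sum_orderings_prod_eq_chainSum w ?_
  rw [card_erase_of_mem ha, hs, Nat.add_sub_cancel]

theorem sum_perm_eq_sum_orderings {M : Type*} [AddCommMonoid M] (m : ℕ)
    (F : (Fin m → Fin m) → M) :
    ∑ σ : Equiv.Perm (Fin m), F σ = ∑ f ∈ orderings m univ, F f := by
  refine sum_bij (fun σ _ => ⇑σ) (fun σ _ => ?_) (fun σ _ τ _ h => DFunLike.coe_injective h)
    (fun f hf => ?_) (fun σ _ => rfl)
  · simp [orderings, σ.injective]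
  · obtain ⟨hf, -⟩ := (mem_filter.1 hf).2
    exact ⟨Equiv.ofBijective f (Finite.injective_iff_bijective.1 hf), mem_univ _, rfl⟩

end Orderings

section Resonance

variable {ι F : Type*} [DecidableEq ι] [Field F]

theorem exists_sum_eq_zero_and_sum_ne_zero [CharZero F] {s : Finset ι} (hs : s.Nonempty) :
    ∃ v : ι → F, ∑ i ∈ s, v i = 0 ∧ ∀ t ⊆ s, t.Nonempty → t ≠ s → ∑ i ∈ t, v i ≠ 0 := by
  obtain ⟨i₀, hi₀⟩ := hs
  refine ⟨fun i => 1 - if i = i₀ then (s.card : F) else 0, ?_, fun t hts ht hne => ?_⟩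
  · simp [sum_sub_distrib, sum_ite_eq', hi₀]
  simp only [sum_sub_distrib, sum_const, nsmul_eq_mul, mul_one, sum_ite_eq']
  have hlt : t.card < s.card := card_lt_card (Finset.ssubset_iff_subset_ne.2 ⟨hts, hne⟩)
  split_ifs
  · rw [sub_ne_zero]
    exact_mod_cast hlt.ne
  · simpa using ht.card_pos.ne'

/-- `γ` is the first-order part carried over from a resonant block preceding `t`. -/
noncomputable def perturbedWeight (x v : ι → F) (γ : F) (t : Finset ι) : LaurentSeries F :=
  (perturb (∑ i ∈ t, x i) (γ + ∑ i ∈ t, v i))⁻¹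

theorem perturbedWeight_union {x : ι → F} (v : ι → F) (γ : F) {I u : Finset ι} (h : Disjoint I u)
    (hI : ∑ i ∈ I, x i = 0) :
    perturbedWeight x v γ (I ∪ u) = perturbedWeight x v (γ + ∑ i ∈ I, v i) u := by
  rw [perturbedWeight, perturbedWeight, sum_union h, sum_union h, hI, zero_add, add_assoc]

theorem hasValueAtZero_properChainSum {w : Finset ι → LaurentSeries F} {w' : Finset ι → F}
    (h : ∀ t, HasValueAtZero (w t) (w' t)) (s : Finset ι) :
    HasValueAtZero (properChainSum w s) (properChainSum w' s) := by
  choose g hg hc using h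
  refine ⟨properChainSum g s, ?_, ?_⟩ <;> rw [map_properChainSum] <;> congr 1 <;> funext t
  exacts [hg t, hc t]

theorem hasValueAtZero_avoiding [DecidableEq F] (x v : ι → F) (γ : F) (s : Finset ι) :
    HasValueAtZero (properChainSum (avoiding (perturbedWeight x v γ) fun t => ∑ i ∈ t, x i = 0) s)
      (properChainSum (fun t => (∑ i ∈ t, x i)⁻¹) s) := by
  refine hasValueAtZero_properChainSum (fun t => ?_) s
  rw [avoiding]
  split_ifs with h
  · simpa [h] using HasValueAtZero.zero
  · exact (hasValueAtZero_perturb _ _).inv h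

def ResolvesResonances (x v : ι → F) (γ : F) (s : Finset ι) : Prop :=
  ∀ t ⊂ s, t.Nonempty → ∑ i ∈ t, x i = 0 → γ + ∑ i ∈ t, v i ≠ 0

theorem ResolvesResonances.sdiff {x v : ι → F} {γ : F} {s I : Finset ι}
    (h : ResolvesResonances x v γ s) (hIs : I ⊂ s) (hIx : ∑ i ∈ I, x i = 0) :
    ResolvesResonances x v (γ + ∑ i ∈ I, v i) (s \ I) := by
  intro J hJ hJne hJx
  have hdisj : Disjoint I J := disjoint_sdiff.mono_right hJ.subset
  obtain ⟨k, hk, hkJ⟩ := exists_of_ssubset hJ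
  have hIJ : I ∪ J ⊂ s := (ssubset_iff_of_subset (union_subset hIs.subset
    (hJ.subset.trans sdiff_subset))).2 ⟨k, (mem_sdiff.1 hk).1, by simp [(mem_sdiff.1 hk).2, hkJ]⟩
  have := h _ hIJ (hJne.mono subset_union_right) (by rw [sum_union hdisj, hIx, hJx, add_zero])
  rwa [sum_union hdisj, ← add_assoc] at this

theorem properChainSum_inv_sum_eq_zero_of_hasValueAtZero [CharZero F] {x : ι → F} {s : Finset ι}
    (hx : ∀ i ∈ s, x i ≠ 0) (hs : ∑ i ∈ s, x i = 0)
    (h : ∀ v : ι → F, ResolvesResonances x v 0 s →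
      HasValueAtZero (properChainSum (perturbedWeight x v 0) s)
        (properChainSum (fun t => (∑ i ∈ t, x i)⁻¹) s)) :
    properChainSum (fun t => (∑ i ∈ t, x i)⁻¹) s = 0 := by
  rcases s.eq_empty_or_nonempty with rfl | hne
  · simp
  obtain ⟨v, hv, hv'⟩ := exists_sum_eq_zero_and_sum_ne_zero (F := F) hne
  have hy : perturbedWeight x v 0 = fun t => (∑ i ∈ t, perturb (x i) (v i))⁻¹ := by
    funext t
    rw [perturbedWeight, sum_perturb, zero_add]
  refine (h v fun t hts ht _ => ?_).unique ?_
  · rw [zero_add]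
    exact hv' t hts.subset ht hts.ne
  rw [hy, properChainSum_inv_sum, sum_perturb, hs, hv, perturb_eq_zero_iff.2 ⟨rfl, rfl⟩, zero_mul]
  · exact HasValueAtZero.zero
  · intro t hts ht hne h0
    rw [sum_perturb] at h0
    exact hv' t hts ht hne (perturb_eq_zero_iff.1 h0).2
  · exact fun i hi h0 => hx i hi (perturb_eq_zero_iff.1 h0).1

theorem hasValueAtZero_resonant_term [DecidableEq F] {x : ι → F} (v : ι → F) (γ : F)
    {s I : Finset ι} (hIx : ∑ i ∈ I, x i = 0) (hγI : γ + ∑ i ∈ I, v i ≠ 0)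
    (hI : properChainSum (fun t => (∑ i ∈ t, x i)⁻¹) I = 0)
    (hrest : HasValueAtZero (properChainSum (perturbedWeight x v (γ + ∑ i ∈ I, v i)) (s \ I)) 0) :
    HasValueAtZero (perturbedWeight x v γ I *
      properChainSum (avoiding (perturbedWeight x v γ) fun t => ∑ i ∈ t, x i = 0) I *
      properChainSum (fun u => perturbedWeight x v γ (I ∪ u)) (s \ I)) 0 := by
  have hfirst := hasValueAtZero_avoiding x v γ I
  rw [hI] at hfirst
  obtain ⟨r, hr⟩ := hfirst.exists_div_perturb_zero hγI
  rw [properChainSum_congr fun u hu _ =>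
      perturbedWeight_union v γ (disjoint_sdiff.mono_right hu) hIx,
    perturbedWeight, hIx, ← div_eq_inv_mul]
  simpa using hr.mul hrest

theorem hasValueAtZero_properChainSum_perturbedWeight [CharZero F] [DecidableEq F] {x : ι → F}
    (s : Finset ι) (hx : ∀ i ∈ s, x i ≠ 0) (hs : ∑ i ∈ s, x i = 0) (v : ι → F) (γ : F)
    (hγ : ResolvesResonances x v γ s) :
    HasValueAtZero (properChainSum (perturbedWeight x v γ) s)
      (properChainSum (fun t => (∑ i ∈ t, x i)⁻¹) s) := by
  induction s using Finset.strongInduction generalizing v γ with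
  | H s ih =>
    have hvanish : ∀ J ⊂ s, ∑ i ∈ J, x i = 0 → properChainSum (fun t => (∑ i ∈ t, x i)⁻¹) J = 0 :=
      fun J hJ hJx => properChainSum_inv_sum_eq_zero_of_hasValueAtZero
        (fun i hi => hx i (hJ.subset hi)) hJx (ih J hJ (fun i hi => hx i (hJ.subset hi)) hJx · 0)
    have hresonant : ∀ I ∈ {I ∈ s.ssubsets | ∑ i ∈ I, x i = 0}, HasValueAtZero
        (perturbedWeight x v γ I *
          properChainSum (avoiding (perturbedWeight x v γ) fun t => ∑ i ∈ t, x i = 0) I *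
          properChainSum (fun u => perturbedWeight x v γ (I ∪ u)) (s \ I)) 0 := by
      intro I hI
      obtain ⟨hIs, hIx⟩ : I ⊂ s ∧ ∑ i ∈ I, x i = 0 := by simpa using hI
      rcases I.eq_empty_or_nonempty with rfl | hIne
      · simpa using HasValueAtZero.zero
      have hsd : s \ I ⊂ s := sdiff_ssubset hIs.subset hIne
      have hsdx : ∑ i ∈ s \ I, x i = 0 := by
        rw [← sum_sdiff hIs.subset, hIx, add_zero] at hs
        exact hs
      refine hasValueAtZero_resonant_term v γ hIx (hγ I hIs hIne hIx) (hvanish I hIs hIx) ?_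
      rw [← hvanish _ hsd hsdx]
      exact ih _ hsd (fun i hi => hx i (hsd.subset hi)) hsdx v _ (hγ.sdiff hIs hIx)
    rw [properChainSum_eq_avoiding_add _ (fun t => ∑ i ∈ t, x i = 0)]
    simpa using (hasValueAtZero_avoiding x v γ s).add (HasValueAtZero.sum hresonant)

theorem properChainSum_inv_sum_eq_zero [CharZero F] {x : ι → F} {s : Finset ι}
    (hx : ∀ i ∈ s, x i ≠ 0) (hs : ∑ i ∈ s, x i = 0) :
    properChainSum (fun t => (∑ i ∈ t, x i)⁻¹) s = 0 := by
  classical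
  exact properChainSum_inv_sum_eq_zero_of_hasValueAtZero hx hs fun v hv =>
    hasValueAtZero_properChainSum_perturbedWeight s hx hs v 0 hv

end Resonance

open scoped Classical

/-- Cancellation of the sum over allowed permutations when the total sum vanishes. -/
theorem resonance_cancellation (n : ℕ) (hn : 2 ≤ n) (x : Fin n → ℝ)
    (hx0 : ∀ i, x i ≠ 0) (hsum : ∑ i, x i = 0) :
    ∑ σ ∈ Finset.univ.filter (fun σ : Equiv.Perm (Fin n) =>
        ∀ k ∈ Finset.Icc 1 (n - 1),
          (∑ j ∈ Finset.univ.filter (fun j : Fin n => (j : ℕ) < k), x (σ j)) ≠ 0),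
      ∏ k ∈ Finset.Icc 1 (n - 1),
        (∑ j ∈ Finset.univ.filter (fun j : Fin n => (j : ℕ) < k), x (σ j))⁻¹ = 0 := by
  obtain ⟨m, rfl⟩ : ∃ m, n = m + 1 := ⟨n - 1, by omega⟩
  have hvanish := properChainSum_inv_sum_eq_zero (fun i _ => hx0 i) hsum
  rw [← sum_orderings_prod_eq_properChainSum (m := m) _ (by simp), ← sum_perm_eq_sum_orderings]
    at hvanish
  refine (sum_subset (subset_univ _) fun σ _ hσ => ?_).trans ?_
  · obtain ⟨k, hk, h0⟩ : ∃ k ∈ Icc 1 (m + 1 - 1),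
        ∑ j ∈ univ.filter (fun j : Fin (m + 1) => (j : ℕ) < k), x (σ j) = 0 := by
      simpa [and_assoc] using hσ
    exact prod_eq_zero hk (by rw [h0, inv_zero])
  rw [Nat.add_sub_cancel, ← hvanish]
  refine sum_congr rfl fun σ _ => prod_congr rfl fun k _ => ?_
  rw [prefixSet, sum_image fun i _ j _ h => σ.injective h]
end

section
/- For every α ∈ (0,1) there exists a constant K > 0 such that for all r ≥ 1 and all finitely supported ν : ℤ → ℤ with Σ_{i∈ℤ} ⟨i⟩^α·|ν_i| ≤ r, one has Σ_{i : ν_i ≠ 0} log(1 + ⟨i⟩²·ν_i²) ≤ K · r^{1/(1+α)} · log(1 + r). -/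
/-! Every index in the support of `ν` carries weight `⟨i⟩^α |ν_i| ≥ 1`, and no single weight exceeds
`r`, so `⟨i⟩ |ν_i| ≤ r^(1/α + 1)` and each factor contributes at most `2 (1/α + 1) log (1 + r)`.
With `M = r^(1/(1+α))`, at most `2M + 1` indices satisfy `⟨i⟩ ≤ M`, and since each remaining index
carries weight at least `M^α` while `M^α · M = r`, at most `M` indices satisfy `⟨i⟩ > M`. -/

/-- ⟨i⟩ := max(1, |i|) as a real number. -/
def jap (i : ℤ) : ℝ := max 1 |(i : ℝ)|

open Finset Real

lemma one_le_jap (i : ℤ) : 1 ≤ jap i := le_max_left _ _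

lemma jap_pos (i : ℤ) : 0 < jap i := zero_lt_one.trans_le (one_le_jap i)

lemma abs_le_jap (i : ℤ) : |(i : ℝ)| ≤ jap i := le_max_right _ _

/-- The weight `|ν|_α`. -/
noncomputable def gevreyNorm (α : ℝ) (ν : ℤ →₀ ℤ) : ℝ := ∑ i ∈ ν.support, jap i ^ α * |(ν i : ℝ)|

lemma one_le_abs_of_mem_support {ν : ℤ →₀ ℤ} {i : ℤ} (hi : i ∈ ν.support) : 1 ≤ |(ν i : ℝ)| := by
  exact_mod_cast Int.one_le_abs (Finsupp.mem_support_iff.mp hi)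

lemma jap_rpow_mul_abs_nonneg (α : ℝ) (ν : ℤ →₀ ℤ) (i : ℤ) : 0 ≤ jap i ^ α * |(ν i : ℝ)| :=
  mul_nonneg (rpow_nonneg (jap_pos i).le α) (abs_nonneg _)

lemma jap_rpow_mul_abs_le_gevreyNorm {α : ℝ} {ν : ℤ →₀ ℤ} {i : ℤ} (hi : i ∈ ν.support) :
    jap i ^ α * |(ν i : ℝ)| ≤ gevreyNorm α ν :=
  single_le_sum (fun j _ => jap_rpow_mul_abs_nonneg α ν j) hi

lemma mul_le_rpow_of_rpow_mul_le {a b r α : ℝ} (hα : 0 < α) (ha : 1 ≤ a) (hb : 1 ≤ b)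
    (h : a ^ α * b ≤ r) : a * b ≤ r ^ (1 / α + 1) := by
  have ha_α : 1 ≤ a ^ α := one_le_rpow ha hα.le
  have hr : 0 < r := by nlinarith
  have har : a ≤ r ^ (1 / α) := by
    calc a = (a ^ α) ^ (1 / α) := by
          rw [← rpow_mul (by linarith), mul_one_div_cancel hα.ne', rpow_one]
      _ ≤ r ^ (1 / α) := by gcongr; nlinarith
  have hbr : b ≤ r := by nlinarith
  calc a * b ≤ r ^ (1 / α) * r := by gcongr
    _ = r ^ (1 / α + 1) := by rw [rpow_add_one hr.ne']

lemma log_one_add_sq_le {y r β : ℝ} (hy : 0 ≤ y) (hr : 0 ≤ r) (hβ : 1 ≤ β) (h : y ≤ r ^ β) :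
    log (1 + y ^ 2) ≤ 2 * β * log (1 + r) := by
  have hpow : 1 + y ≤ (1 + r) ^ β :=
    calc 1 + y ≤ 1 ^ β + r ^ β := by rw [one_rpow]; linarith
      _ ≤ (1 + r) ^ β := add_rpow_le_rpow_add zero_le_one hr hβ
  calc log (1 + y ^ 2) ≤ log ((1 + y) ^ 2) := log_le_log (by positivity) (by nlinarith)
    _ = 2 * log (1 + y) := by rw [log_pow]; norm_num
    _ ≤ 2 * log ((1 + r) ^ β) := by gcongr
    _ = 2 * β * log (1 + r) := by rw [log_rpow (by linarith)]; ring

lemma card_filter_mul_le_sum {ι R : Type*} [Semiring R] [PartialOrder R] [IsOrderedRing R]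
    (s : Finset ι) (f : ι → R) (p : ι → Prop) [DecidablePred p] {t : R}
    (hf : ∀ i ∈ s, 0 ≤ f i) (ht : ∀ i ∈ s, p i → t ≤ f i) :
    #(s.filter p) * t ≤ ∑ i ∈ s, f i := by
  calc #(s.filter p) * t ≤ ∑ i ∈ s.filter p, f i := by
        rw [← nsmul_eq_mul]
        exact card_nsmul_le_sum _ _ _ fun i hi => ht i (mem_filter.1 hi).1 (mem_filter.1 hi).2
    _ ≤ ∑ i ∈ s, f i := sum_le_sum_of_subset_of_nonneg (filter_subset _ _) fun i hi _ => hf i hi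

lemma card_filter_jap_le (s : Finset ℤ) {M : ℝ} (hM : 0 ≤ M) :
    (#(s.filter (jap · ≤ M)) : ℝ) ≤ 2 * M + 1 := by
  have hsub : s.filter (jap · ≤ M) ⊆ Icc (-⌊M⌋) ⌊M⌋ := fun i hi => by
    have hiM : |(i : ℝ)| ≤ M := (abs_le_jap i).trans (mem_filter.1 hi).2
    rw [mem_Icc, ← abs_le, Int.le_floor]
    exact_mod_cast hiM
  have hfloor : 0 ≤ ⌊M⌋ := Int.floor_nonneg.2 hM
  have hcard : (#(Icc (-⌊M⌋) ⌊M⌋) : ℤ) = 2 * ⌊M⌋ + 1 := by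
    rw [Int.card_Icc]; omega
  calc (#(s.filter (jap · ≤ M)) : ℝ) ≤ #(Icc (-⌊M⌋) ⌊M⌋) := by
        exact_mod_cast card_le_card hsub
    _ = 2 * ⌊M⌋ + 1 := by exact_mod_cast hcard
    _ ≤ 2 * M + 1 := by linarith [Int.floor_le M]

lemma card_support_le_of_gevreyNorm_le {α r : ℝ} (hα : 0 < α) (hr : 1 ≤ r) {ν : ℤ →₀ ℤ}
    (hν : gevreyNorm α ν ≤ r) :
    (#ν.support : ℝ) ≤ 4 * r ^ (1 / (1 + α)) := by
  set M := r ^ (1 / (1 + α))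
  have hM : 1 ≤ M := one_le_rpow hr (by positivity)
  have hMα : M ^ α * M = r := by
    rw [← rpow_add_one (by positivity), ← rpow_mul (by linarith),
      show 1 / (1 + α) * (α + 1) = 1 by field_simp; ring, rpow_one]
  have hnear := card_filter_jap_le ν.support (M := M) (by linarith)
  have hfar : (#(ν.support.filter (¬ jap · ≤ M)) : ℝ) ≤ M := by
    refine le_of_mul_le_mul_right ?_ (by positivity : 0 < M ^ α)
    rw [mul_comm M, hMα]
    refine (card_filter_mul_le_sum _ _ _ (fun i _ => jap_rpow_mul_abs_nonneg α ν i)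
      fun i hi hiM => ?_).trans hν
    calc M ^ α ≤ jap i ^ α * 1 := by rw [mul_one]; gcongr; linarith
      _ ≤ jap i ^ α * |(ν i : ℝ)| := by
        gcongr
        · exact rpow_nonneg (jap_pos i).le α
        · exact one_le_abs_of_mem_support hi
  rw [← card_filter_add_card_filter_not (s := ν.support) (jap · ≤ M)]
  push_cast
  linarith

theorem diophantine_product_bound_general (α : ℝ) (hα0 : 0 < α) :
    ∃ K : ℝ, 0 < K ∧ ∀ r : ℝ, 1 ≤ r → ∀ ν : ℤ →₀ ℤ,
      (∑ i ∈ ν.support, jap i ^ α * |(ν i : ℝ)|) ≤ r →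
      (∑ i ∈ ν.support, Real.log (1 + jap i ^ 2 * (ν i : ℝ) ^ 2))
        ≤ K * r ^ (1 / (1 + α)) * Real.log (1 + r) := by
  refine ⟨4 * (2 * (1 / α + 1)), by positivity, fun r hr ν hν => ?_⟩
  have hβ : 1 ≤ 1 / α + 1 := le_add_of_nonneg_left (by positivity)
  have hterm : ∀ i ∈ ν.support,
      log (1 + jap i ^ 2 * (ν i : ℝ) ^ 2) ≤ 2 * (1 / α + 1) * log (1 + r) := fun i hi => by
    rw [← sq_abs (ν i : ℝ), ← mul_pow]
    exact log_one_add_sq_le (mul_nonneg (jap_pos i).le (abs_nonneg _)) (by linarith) hβ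
      (mul_le_rpow_of_rpow_mul_le hα0 (one_le_jap i) (one_le_abs_of_mem_support hi)
        ((jap_rpow_mul_abs_le_gevreyNorm hi).trans hν))
  have hlog : 0 ≤ log (1 + r) := log_nonneg (by linarith)
  calc ∑ i ∈ ν.support, log (1 + jap i ^ 2 * (ν i : ℝ) ^ 2)
      ≤ #ν.support * (2 * (1 / α + 1) * log (1 + r)) := by
        rw [← nsmul_eq_mul]; exact sum_le_card_nsmul _ _ _ hterm
    _ ≤ 4 * r ^ (1 / (1 + α)) * (2 * (1 / α + 1) * log (1 + r)) := by
        gcongr; exact card_support_le_of_gevreyNorm_le hα0 hr hν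
    _ = 4 * (2 * (1 / α + 1)) * r ^ (1 / (1 + α)) * log (1 + r) := by ring

/-- Comparison of Diophantine-type products with the Gevrey weight |ν|_α. -/
theorem diophantine_product_bound (α : ℝ) (hα0 : 0 < α) (hα1 : α < 1) :
    ∃ K : ℝ, 0 < K ∧ ∀ r : ℝ, 1 ≤ r → ∀ ν : ℤ →₀ ℤ,
      (∑ i ∈ ν.support, jap i ^ α * |(ν i : ℝ)|) ≤ r →
      (∑ i ∈ ν.support, Real.log (1 + jap i ^ 2 * (ν i : ℝ) ^ 2))
        ≤ K * r ^ (1 / (1 + α)) * Real.log (1 + r) :=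
  diophantine_product_bound_general α hα0
end

section
/- For every real τ > 1/2 there exists a constant C > 0, independent of d, such that for every d ≥ 1 one has Σ_{ν ∈ ℤ^d} ∏_{i=1}^{d} (1 + i²·νᵢ²)^{−τ} ≤ C. -/
/-!
The sum factorizes over the coordinates: it is `∏ᵢ Sᵢ` with
`Sᵢ = ∑_{n ∈ ℤ} (1 + i²n²)^{-τ} ≤ 1 + 2 i^{-2τ} ζ`, where `ζ = ∑_{n ≥ 1} n^{-2τ}` is finite because
`2τ > 1`. By `1 + x ≤ eˣ` the product is at most `exp (2ζ ∑ᵢ i^{-2τ}) ≤ exp (2ζ²)`, whatever `d` is.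
-/

open scoped ENNReal
open Real

theorem ENNReal.tsum_fin_pi_prod {α : Type*} {d : ℕ} (f : Fin d → α → ℝ≥0∞) :
    ∑' ν : Fin d → α, ∏ i, f i (ν i) = ∏ i, ∑' a, f i a := by
  induction d with
  | zero => simp
  | succ d ih =>
    rw [← (Fin.consEquiv fun _ ↦ α).tsum_eq, ENNReal.tsum_prod', Fin.prod_univ_succ,
      ← ih fun i ↦ f i.succ, ← ENNReal.tsum_mul_right]
    simp [Fin.prod_univ_succ, ENNReal.tsum_mul_left]

theorem Real.prod_fin_one_add_le_exp_tsum {f : ℕ → ℝ} (hf : ∀ n, 0 ≤ f n) (hs : Summable f)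
    (d : ℕ) : ∏ i : Fin d, (1 + f i) ≤ exp (∑' n, f n) := by
  rw [Fin.prod_univ_eq_prod_range (fun n ↦ 1 + f n)]
  exact (prod_one_add_le_exp_sum _ hf).trans
    (exp_le_exp.2 (hs.sum_le_tsum _ fun n _ ↦ hf n))

theorem summable_nat_add_one_rpow {p : ℝ} (hp : p < -1) :
    Summable fun n : ℕ ↦ ((n : ℝ) + 1) ^ p := by
  simpa using (summable_nat_add_iff 1).2 (Real.summable_nat_rpow.2 hp)

theorem one_add_sq_mul_sq_rpow_neg_le {c x τ : ℝ} (hc : 0 < c) (hx : 0 < x) (hτ : 0 ≤ τ) :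
    (1 + c ^ 2 * x ^ 2) ^ (-τ) ≤ c ^ (-(2 * τ)) * x ^ (-(2 * τ)) :=
  calc (1 + c ^ 2 * x ^ 2) ^ (-τ)
      ≤ ((c * x) ^ 2) ^ (-τ) :=
        rpow_le_rpow_of_nonpos (by positivity) (by rw [mul_pow]; linarith) (neg_nonpos.2 hτ)
    _ = (c * x) ^ (-(2 * τ)) := by
        rw [← rpow_natCast_mul (by positivity)]; norm_num
    _ = c ^ (-(2 * τ)) * x ^ (-(2 * τ)) := mul_rpow hc.le hx.le

theorem tsum_int_ofReal_one_add_sq_mul_sq_rpow_neg_le {c τ : ℝ} (hc : 0 < c) (hτ : 1 / 2 < τ) :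
    ∑' n : ℤ, ENNReal.ofReal ((1 + c ^ 2 * (n : ℝ) ^ 2) ^ (-τ))
      ≤ ENNReal.ofReal (1 + 2 * c ^ (-(2 * τ)) * ∑' n : ℕ, ((n : ℝ) + 1) ^ (-(2 * τ))) := by
  set g : ℤ → ℝ≥0∞ := fun n ↦ ENNReal.ofReal ((1 + c ^ 2 * (n : ℝ) ^ 2) ^ (-τ))
  set ζ := ∑' n : ℕ, ((n : ℝ) + 1) ^ (-(2 * τ))
  have hζ : Summable fun n : ℕ ↦ ((n : ℝ) + 1) ^ (-(2 * τ)) :=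
    summable_nat_add_one_rpow (by linarith)
  have hneg (n : ℕ) : g (-(n + 1)) = g (n + 1) := by simp only [g, Int.cast_neg, neg_sq]
  have htail : ∑' n : ℕ, g (n + 1) ≤ ENNReal.ofReal (c ^ (-(2 * τ)) * ζ) :=
    calc ∑' n : ℕ, g (n + 1)
        ≤ ∑' n : ℕ, ENNReal.ofReal (c ^ (-(2 * τ)) * ((n : ℝ) + 1) ^ (-(2 * τ))) :=
          ENNReal.tsum_le_tsum fun n ↦ ENNReal.ofReal_le_ofReal <| by
            push_cast
            exact one_add_sq_mul_sq_rpow_neg_le hc (by positivity) (by linarith)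
      _ = ENNReal.ofReal (c ^ (-(2 * τ)) * ζ) := by
          rw [← ENNReal.ofReal_tsum_of_nonneg (fun n ↦ by positivity) (hζ.mul_left _),
            tsum_mul_left]
  have hζ0 : 0 ≤ c ^ (-(2 * τ)) * ζ := by positivity
  calc ∑' n : ℤ, g n = ∑' n : ℕ, g (n + 1) + g 0 + ∑' n : ℕ, g (n + 1) := by
        rw [tsum_of_add_one_of_neg_add_one ENNReal.summable ENNReal.summable]
        simp_rw [hneg]
    _ ≤ ENNReal.ofReal (c ^ (-(2 * τ)) * ζ) + 1 + ENNReal.ofReal (c ^ (-(2 * τ)) * ζ) := by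
        gcongr; simp [g]
    _ = ENNReal.ofReal (1 + 2 * c ^ (-(2 * τ)) * ζ) := by
        rw [← ENNReal.ofReal_one, ← ENNReal.ofReal_add hζ0 zero_le_one,
          ← ENNReal.ofReal_add (by positivity) hζ0]
        ring_nf

/-- Bourgain's estimate: the sum over ν ∈ ℤ^d of ∏ (1 + i²νᵢ²)^{−τ} is bounded uniformly
in the dimension d, for τ > 1/2. -/
theorem bourgain_sum_bound (τ : ℝ) (hτ : 1 / 2 < τ) :
    ∃ C : ℝ, 0 < C ∧ ∀ d : ℕ, 1 ≤ d →
      ∑' ν : Fin d → ℤ, ENNReal.ofReal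
          (∏ i : Fin d, (1 + ((i : ℕ) + 1 : ℝ) ^ 2 * (ν i : ℝ) ^ 2) ^ (-τ))
        ≤ ENNReal.ofReal C := by
  set ζ := ∑' n : ℕ, ((n : ℝ) + 1) ^ (-(2 * τ))
  set f : ℕ → ℝ := fun n ↦ 2 * ((n : ℝ) + 1) ^ (-(2 * τ)) * ζ
  have hf : Summable f := ((summable_nat_add_one_rpow (by linarith)).mul_left 2).mul_right ζ
  refine ⟨exp (∑' n, f n), exp_pos _, fun d _ ↦ ?_⟩
  calc ∑' ν : Fin d → ℤ, ENNReal.ofReal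
          (∏ i : Fin d, (1 + ((i : ℕ) + 1 : ℝ) ^ 2 * (ν i : ℝ) ^ 2) ^ (-τ))
      = ∏ i : Fin d,
          ∑' n : ℤ, ENNReal.ofReal ((1 + ((i : ℕ) + 1 : ℝ) ^ 2 * (n : ℝ) ^ 2) ^ (-τ)) := by
        rw [← ENNReal.tsum_fin_pi_prod]
        exact tsum_congr fun ν ↦
          ENNReal.ofReal_prod_of_nonneg fun _ _ ↦ rpow_nonneg (by positivity) _
    _ ≤ ∏ i : Fin d, ENNReal.ofReal (1 + f i) := by
        gcongr with i
        exact tsum_int_ofReal_one_add_sq_mul_sq_rpow_neg_le (by positivity) hτ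
    _ ≤ ENNReal.ofReal (exp (∑' n, f n)) := by
        rw [← ENNReal.ofReal_prod_of_nonneg fun i _ ↦ by positivity]
        exact ENNReal.ofReal_le_ofReal (prod_fin_one_add_le_exp_tsum (fun n ↦ by positivity) hf d)
end

section
/- Let β : [1,∞) → ℝ be nonincreasing with 0 < β(x) ≤ 1/2 for all x ≥ 1, and let (r_m)_{m≥0} be a sequence of reals with r₀ = 1, r_m strictly increasing, and r_m → ∞. Then Σ_{n≥0} 2^{−n}·log(1/β(2ⁿ)) ≤ 2·Σ_{m≥1} (1/r_{m−1})·log(1/β(r_m)). -/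
/-!
Group the dyadic indices `n` according to the `m` with `r m ≤ 2 ^ n < r (m + 1)`. On such a
block `β (2 ^ n) ≥ β (r (m + 1))` by monotonicity, and the weights `2⁻ⁿ` over `n` with
`2 ^ n ≥ r m` form a geometric tail of total mass at most `2 / r m`.
-/

open ENNReal Filter

lemma exists_le_lt_succ_of_tendsto_atTop {α : Type*} [LinearOrder α] [NoMaxOrder α]
    {t : ℕ → α} (ht : Tendsto t atTop atTop) {x : α} (hx : t 0 ≤ x) :
    ∃ n, t n ≤ x ∧ x < t (n + 1) := by
  classical
  have hex : ∃ n, x < t n := (ht.eventually_gt_atTop x).exists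
  have hpos : Nat.find hex ≠ 0 := fun h => (h ▸ Nat.find_spec hex).not_ge hx
  refine ⟨Nat.find hex - 1, not_lt.1 (Nat.find_min hex (Nat.sub_one_lt hpos)), ?_⟩
  rw [Nat.sub_add_cancel (Nat.one_le_iff_ne_zero.2 hpos)]
  exact Nat.find_spec hex

lemma ENNReal.ofReal_inv_two_pow (n : ℕ) : ENNReal.ofReal ((2 : ℝ) ^ n)⁻¹ = 2⁻¹ ^ n := by
  rw [ENNReal.ofReal_inv_of_pos (by positivity), ENNReal.ofReal_pow zero_le_two, ofReal_ofNat,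
    ENNReal.inv_pow]

lemma ENNReal.tsum_subtype_inv_two_pow_le {s : Set ℕ} {n₀ : ℕ} (hs : ∀ n ∈ s, n₀ ≤ n) :
    ∑' n : s, (2 : ℝ≥0∞)⁻¹ ^ (n : ℕ) ≤ 2 * 2⁻¹ ^ n₀ := by
  have hinj : Function.Injective fun n : s => (n : ℕ) - n₀ := fun a b hab =>
    Subtype.ext (by have := hs a a.2; have := hs b b.2; simp only at hab; omega)
  calc ∑' n : s, (2 : ℝ≥0∞)⁻¹ ^ (n : ℕ) = ∑' n : s, 2⁻¹ ^ n₀ * 2⁻¹ ^ ((n : ℕ) - n₀) := by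
        refine tsum_congr fun n => ?_
        rw [← pow_add, Nat.add_sub_cancel' (hs n n.2)]
    _ ≤ ∑' k : ℕ, 2⁻¹ ^ n₀ * 2⁻¹ ^ k :=
        ENNReal.tsum_comp_le_tsum_of_injective hinj fun k => 2⁻¹ ^ n₀ * 2⁻¹ ^ k
    _ = 2 * 2⁻¹ ^ n₀ := by
        rw [ENNReal.tsum_mul_left, ENNReal.tsum_geometric, ENNReal.one_sub_inv_two, inv_inv,
          mul_comm]

lemma ENNReal.tsum_subtype_ofReal_inv_two_pow_le {x : ℝ} (hx : 0 < x) {s : Set ℕ}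
    (hs : ∀ n ∈ s, x ≤ 2 ^ n) :
    ∑' n : s, ENNReal.ofReal ((2 : ℝ) ^ (n : ℕ))⁻¹ ≤ 2 * ENNReal.ofReal x⁻¹ := by
  classical
  have hex : ∃ n : ℕ, x ≤ 2 ^ n := (pow_unbounded_of_one_lt x (by norm_num)).imp fun _ h => h.le
  simp_rw [ENNReal.ofReal_inv_two_pow]
  calc ∑' n : s, (2 : ℝ≥0∞)⁻¹ ^ (n : ℕ) ≤ 2 * 2⁻¹ ^ Nat.find hex :=
        tsum_subtype_inv_two_pow_le fun n hn => Nat.find_min' hex (hs n hn)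
    _ ≤ 2 * ENNReal.ofReal x⁻¹ := by
        rw [← ENNReal.ofReal_inv_two_pow]
        gcongr
        exact Nat.find_spec hex

theorem bryuno_dyadic_general (β : ℝ → ℝ)
    (hβpos : ∀ x : ℝ, 1 ≤ x → 0 < β x)
    (hβmono : ∀ x y : ℝ, 1 ≤ x → x ≤ y → β y ≤ β x)
    (r : ℕ → ℝ) (hr0 : r 0 = 1) (hrmono : StrictMono r)
    (hrdiv : Filter.Tendsto r Filter.atTop Filter.atTop) :
    ∑' n : ℕ, ENNReal.ofReal (((2 : ℝ) ^ n)⁻¹ * Real.log (1 / β ((2 : ℝ) ^ n)))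
      ≤ 2 * ∑' m : ℕ, ENNReal.ofReal ((r m)⁻¹ * Real.log (1 / β (r (m + 1)))) := by
  have hr_pos (m : ℕ) : 0 < r m := zero_lt_one.trans_le (hr0 ▸ hrmono.monotone m.zero_le)
  have hlog (x y : ℝ) (hx : 1 ≤ x) (hxy : x ≤ y) : Real.log (1 / β x) ≤ Real.log (1 / β y) :=
    Real.log_le_log (one_div_pos.2 (hβpos x hx))
      (one_div_le_one_div_of_le (hβpos y (hx.trans hxy)) (hβmono x y hx hxy))
  choose g hg_le hg_lt using fun n : ℕ =>
    exists_le_lt_succ_of_tendsto_atTop hrdiv (x := (2 : ℝ) ^ n) (hr0 ▸ one_le_pow₀ one_le_two)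
  rw [← tsum_fiberwise _ g, ← ENNReal.tsum_mul_left]
  refine ENNReal.tsum_le_tsum fun m => ?_
  set L := Real.log (1 / β (r (m + 1)))
  have hfiber (n : g ⁻¹' {m}) : g n = m := n.2
  calc ∑' n : g ⁻¹' {m}, ENNReal.ofReal (((2 : ℝ) ^ (n : ℕ))⁻¹ * Real.log (1 / β (2 ^ (n : ℕ))))
      ≤ ∑' n : g ⁻¹' {m}, ENNReal.ofReal ((2 : ℝ) ^ (n : ℕ))⁻¹ * ENNReal.ofReal L :=
        ENNReal.tsum_le_tsum fun n => by
          rw [← ENNReal.ofReal_mul (by positivity)]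
          gcongr
          exact hlog _ _ (one_le_pow₀ one_le_two) (hfiber n ▸ hg_lt n).le
    _ = (∑' n : g ⁻¹' {m}, ENNReal.ofReal ((2 : ℝ) ^ (n : ℕ))⁻¹) * ENNReal.ofReal L :=
        ENNReal.tsum_mul_right
    _ ≤ 2 * ENNReal.ofReal (r m)⁻¹ * ENNReal.ofReal L := by
        gcongr
        exact tsum_subtype_ofReal_inv_two_pow_le (hr_pos m) fun n hn => hn ▸ hg_le n
    _ = 2 * ENNReal.ofReal ((r m)⁻¹ * L) := by
        rw [ENNReal.ofReal_mul (inv_nonneg.2 (hr_pos m).le), mul_assoc]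

/-- The Bryuno condition with an arbitrary diverging increasing sequence implies the
classical Bryuno condition with the dyadic sequence. -/
theorem bryuno_dyadic (β : ℝ → ℝ)
    (hβpos : ∀ x : ℝ, 1 ≤ x → 0 < β x) (hβhalf : ∀ x : ℝ, 1 ≤ x → β x ≤ 1 / 2)
    (hβmono : ∀ x y : ℝ, 1 ≤ x → x ≤ y → β y ≤ β x)
    (r : ℕ → ℝ) (hr0 : r 0 = 1) (hrmono : StrictMono r)
    (hrdiv : Filter.Tendsto r Filter.atTop Filter.atTop) :
    ∑' n : ℕ, ENNReal.ofReal (((2 : ℝ) ^ n)⁻¹ * Real.log (1 / β ((2 : ℝ) ^ n)))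
      ≤ 2 * ∑' m : ℕ, ENNReal.ofReal ((r m)⁻¹ * Real.log (1 / β (r (m + 1)))) :=
  bryuno_dyadic_general β hβpos hβmono r hr0 hrmono hrdiv
end
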